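/- Power balance for the Mindlin plate: for a smooth solution of the Mindlin port-Hamiltonian system with distributed forcing f and τ and clamped boundary conditions, dH/dt = ∫_Ω (e_w f + e_θ · τ) dΩ, i.e., the time derivative of energy equals the power of the distributed inputs paired with the collocated outputs. -/

import Mathlib

open MeasureTheory Bornology Real Matrix

attribute [local instance] Matrix.normedAddCommGroup Matrix.normedSpace

noncomputable section

abbrev V2 := Fin 2 → ℝ
abbrev M2 := Matrix (Fin 2) (Fin 2) ℝ

/-- partial derivative in direction `i` -/
def pd (i : Fin 2) (f : V2 → ℝ) (x : V2) : ℝ := fderiv ℝ f x (Pi.single i 1)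

/-- gradient of a scalar field -/
def grad (f : V2 → ℝ) (x : V2) : V2 := fun i => pd i f x

/-- Jacobian matrix of a vector field -/
def jac (u : V2 → V2) (x : V2) : M2 := fun i j => pd j (fun y => u y i) x

/-- skew-symmetric part of a matrix -/
def skw (A : M2) : M2 := (2⁻¹ : ℝ) • (A - Aᵀ)

/-- symmetric part of a matrix -/
def symP (A : M2) : M2 := (2⁻¹ : ℝ) • (A + Aᵀ)

/-- symmetric gradient -/
def sgrad (u : V2 → V2) (x : V2) : M2 := symP (jac u x)

/-- divergence of a vector field -/
def divv (u : V2 → V2) (x : V2) : ℝ := ∑ i, pd i (fun y => u y i) x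

/-- row-wise (column-wise) divergence of a matrix field -/
def DivM (M : V2 → M2) (x : V2) : V2 := fun j => ∑ i, pd i (fun y => M y i j) x

/-- Hessian matrix -/
def hess (f : V2 → ℝ) (x : V2) : M2 := fun i j => pd i (fun y => pd j f y) x

/-- double divergence of a matrix field -/
def divDiv (M : V2 → M2) (x : V2) : ℝ := ∑ i, ∑ j, pd i (fun y => pd j (fun z => M z i j) y) x

/-- Frobenius contraction -/
def frob (A B : M2) : ℝ := ∑ i, ∑ j, A i j * B i j

/-! ### Auxiliary lemmas -/

lemma slice_t {E : Type*} [NormedAddCommGroup E] [NormedSpace ℝ E]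
    (g : ℝ → V2 → E) (hg : ContDiff ℝ (⊤ : ℕ∞) (Function.uncurry g)) (t : ℝ) :
    ContDiff ℝ (⊤ : ℕ∞) (g t) :=
  hg.comp (contDiff_const.prodMk contDiff_id)

lemma slice_x {E : Type*} [NormedAddCommGroup E] [NormedSpace ℝ E]
    (g : ℝ → V2 → E) (hg : ContDiff ℝ (⊤ : ℕ∞) (Function.uncurry g)) (x : V2) :
    ContDiff ℝ (⊤ : ℕ∞) (fun s => g s x) :=
  hg.comp (contDiff_id.prodMk contDiff_const)

lemma hasDerivAt_slice {E : Type*} [NormedAddCommGroup E] [NormedSpace ℝ E]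
    (g : ℝ → V2 → E) (hg : ContDiff ℝ (⊤ : ℕ∞) (Function.uncurry g)) (x : V2) (s : ℝ) :
    HasDerivAt (fun s => g s x) (fderiv ℝ (Function.uncurry g) (s, x) (1, 0)) s := by
  have h1 : HasDerivAt (fun s : ℝ => (s, x)) ((1 : ℝ), (0 : V2)) s :=
    (hasDerivAt_id s).prodMk (hasDerivAt_const s x)
  have h2 : HasFDerivAt (Function.uncurry g) (fderiv ℝ (Function.uncurry g) (s, x)) (s, x) :=
    (hg.differentiable (by simp) (s, x)).hasFDerivAt
  exact h2.comp_hasDerivAt s h1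

/-- differentiation under the integral sign for jointly smooth integrands over bounded sets -/
lemma deriv_under_integral (Ω : Set V2) (hΩm : MeasurableSet Ω) (hΩb : IsBounded Ω)
    (g : ℝ → V2 → ℝ) (hg : ContDiff ℝ (⊤ : ℕ∞) (Function.uncurry g)) (t : ℝ) :
    HasDerivAt (fun s => ∫ x in Ω, g s x) (∫ x in Ω, deriv (fun s => g s x) t) t := by
  set g' : ℝ → V2 → ℝ := fun s x => fderiv ℝ (Function.uncurry g) (s, x) (1, 0) with hg'def
  have hder : ∀ s x, HasDerivAt (fun s => g s x) (g' s x) s := fun s x =>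
    hasDerivAt_slice g hg x s
  have hg'cont : Continuous (Function.uncurry g') := by
    have : Continuous (fderiv ℝ (Function.uncurry g)) := hg.continuous_fderiv (by simp)
    exact (ContinuousLinearMap.apply ℝ ℝ ((1:ℝ), (0:V2))).continuous.comp this
  have hK : IsCompact ((Metric.closedBall t 1) ×ˢ closure Ω) :=
    (isCompact_closedBall t 1).prod hΩb.isCompact_closure
  obtain ⟨C, hC⟩ := hK.exists_bound_of_continuousOn hg'cont.continuousOn
  have hμ : volume Ω < ⊤ := hΩb.measure_lt_top
  have hint : ∀ s, IntegrableOn (g s) Ω := fun s =>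
    (((slice_t g hg s).continuous.continuousOn).integrableOn_compact hΩb.isCompact_closure).mono_set
      subset_closure
  have hint' : IntegrableOn (g' t) Ω :=
    ((hg'cont.comp (Continuous.prodMk_right t)).continuousOn.integrableOn_compact
      hΩb.isCompact_closure).mono_set subset_closure
  have key := hasDerivAt_integral_of_dominated_loc_of_deriv_le (μ := volume.restrict Ω)
    (F := fun s x => g s x) (F' := g') (x₀ := t) (bound := fun _ => C) (Metric.ball_mem_nhds t one_pos)
    (Filter.Eventually.of_forall fun s => ((slice_t g hg s).continuous).aestronglyMeasurable)
    (hint t) (hint'.aestronglyMeasurable)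
    ?_ ?_ ?_
  · have := key.2
    have hcongr : ∫ x in Ω, g' t x = ∫ x in Ω, deriv (fun s => g s x) t :=
      setIntegral_congr_fun hΩm fun x _ => ((hder t x).deriv).symm
    rwa [hcongr] at this
  · refine (ae_restrict_iff' hΩm).2 (Filter.Eventually.of_forall fun a ha => fun s hs => ?_)
    exact hC (s, a) ⟨Metric.ball_subset_closedBall hs, subset_closure ha⟩
  · exact (integrableOn_const hμ.ne)
  · exact Filter.Eventually.of_forall fun x => fun s _ => hder s x

lemma pd_add' (i : Fin 2) (f g : V2 → ℝ) (x : V2) (hf : DifferentiableAt ℝ f x)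
    (hg : DifferentiableAt ℝ g x) :
    pd i (fun y => f y + g y) x = pd i f x + pd i g x := by
  unfold pd; rw [fderiv_fun_add hf hg]; rfl

lemma pd_mul' (i : Fin 2) (f g : V2 → ℝ) (x : V2) (hf : DifferentiableAt ℝ f x)
    (hg : DifferentiableAt ℝ g x) :
    pd i (fun y => f y * g y) x = pd i f x * g x + f x * pd i g x := by
  unfold pd; rw [fderiv_fun_mul hf hg]
  simp only [ContinuousLinearMap.add_apply, ContinuousLinearMap.smul_apply, smul_eq_mul]
  ring

lemma pd_sum' (i : Fin 2) (f : Fin 2 → V2 → ℝ) (x : V2)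
    (hf : ∀ j, DifferentiableAt ℝ (f j) x) :
    pd i (fun y => ∑ j, f j y) x = ∑ j, pd i (f j) x := by
  unfold pd
  rw [fderiv_fun_sum (fun j _ => hf j)]
  simp

/-- divergence of the combined flux `e_w • e_γ + E *ᵥ e_θ` -/
lemma divv_comb (ew : V2 → ℝ) (eγ eθ : V2 → V2) (E : V2 → M2)
    (hew : ContDiff ℝ (⊤ : ℕ∞) ew) (heγ : ContDiff ℝ (⊤ : ℕ∞) eγ) (heθ : ContDiff ℝ (⊤ : ℕ∞) eθ)
    (hE : ContDiff ℝ (⊤ : ℕ∞) E) (hEsym : ∀ y, (E y)ᵀ = E y) (x : V2) :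
    divv (fun y => ew y • eγ y + (E y).mulVec (eθ y)) x =
      grad ew x ⬝ᵥ eγ x + ew x * divv eγ x + DivM E x ⬝ᵥ eθ x + frob (E x) (sgrad eθ x) := by
  have dew : DifferentiableAt ℝ ew x := hew.differentiable (by simp) x
  have deγ : ∀ i, DifferentiableAt ℝ (fun y => eγ y i) x := fun i =>
    (contDiff_pi.mp heγ i).differentiable (by simp) x
  have deθ : ∀ i, DifferentiableAt ℝ (fun y => eθ y i) x := fun i =>
    (contDiff_pi.mp heθ i).differentiable (by simp) x
  have dE : ∀ i j, DifferentiableAt ℝ (fun y => E y i j) x := fun i j =>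
    (contDiff_pi.mp (contDiff_pi.mp hE i) j).differentiable (by simp) x
  have hcomp : ∀ i, (fun y => (ew y • eγ y + (E y).mulVec (eθ y)) i) =
      (fun y => ew y * eγ y i + ∑ j, E y i j * eθ y j) := by
    intro i; funext y; simp only [Pi.add_apply, Pi.smul_apply, smul_eq_mul, Matrix.mulVec, dotProduct]
  have hpd : ∀ i, pd i (fun y => (ew y • eγ y + (E y).mulVec (eθ y)) i) x =
      (pd i ew x * eγ x i + ew x * pd i (fun y => eγ y i) x) +
        ∑ j, (pd i (fun y => E y i j) x * eθ x j + E x i j * pd i (fun y => eθ y j) x) := by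
    intro i
    rw [hcomp i, pd_add' i _ _ x (dew.fun_mul (deγ i))
      (DifferentiableAt.fun_sum (fun j _ => (dE i j).fun_mul (deθ j))),
      pd_mul' i _ _ x dew (deγ i),
      pd_sum' i _ x (fun j => (dE i j).fun_mul (deθ j))]
    congr 1
    exact Finset.sum_congr rfl fun j _ => pd_mul' i _ _ x (dE i j) (deθ j)
  have hs01 : E x 0 1 = E x 1 0 := by
    conv_lhs => rw [← hEsym x]
    rfl
  simp only [divv, hpd, grad, DivM, frob, sgrad, symP, jac, dotProduct,
    Fin.sum_univ_two, Matrix.smul_apply, Matrix.add_apply, Matrix.transpose_apply, smul_eq_mul]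
  ring_nf
  rw [hs01]
  ring

lemma continuous_pd (i : Fin 2) (g : V2 → ℝ) (hg : ContDiff ℝ (⊤ : ℕ∞) g) :
    Continuous (pd i g) :=
  (ContinuousLinearMap.apply ℝ ℝ (Pi.single i 1)).continuous.comp (hg.continuous_fderiv (by simp))

lemma continuous_divv (u : V2 → V2) (hu : ContDiff ℝ (⊤ : ℕ∞) u) : Continuous (divv u) :=
  continuous_finset_sum _ fun i _ => continuous_pd i _ (contDiff_pi.mp hu i)

lemma cont_integrableOn (Ω : Set V2) (hΩb : IsBounded Ω) (g : V2 → ℝ) (hg : Continuous g) :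
    IntegrableOn g Ω :=
  ((hg.continuousOn).integrableOn_compact hΩb.isCompact_closure).mono_set subset_closure

/-- time derivative of the Mindlin energy density at a point -/
lemma dens_hasDerivAt (ρb c : ℝ) (𝒟 : M2 →ₗ[ℝ] M2) (𝒞 : V2 →ₗ[ℝ] V2)
    (α_w : ℝ → V2 → ℝ) (α_θ α_γ : ℝ → V2 → V2) (A_κ : ℝ → V2 → M2)
    (hsm_w : ContDiff ℝ (⊤ : ℕ∞) (Function.uncurry α_w))
    (hsm_θ : ContDiff ℝ (⊤ : ℕ∞) (Function.uncurry α_θ))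
    (hsm_γ : ContDiff ℝ (⊤ : ℕ∞) (Function.uncurry α_γ))
    (hsm_κ : ContDiff ℝ (⊤ : ℕ∞) (Function.uncurry A_κ)) (t : ℝ) (x : V2) :
    HasDerivAt (fun s => α_w s x ^ 2 / ρb + c * (α_θ s x ⬝ᵥ α_θ s x)
        + frob (𝒟 (A_κ s x)) (A_κ s x) + 𝒞 (α_γ s x) ⬝ᵥ α_γ s x)
      ((deriv (fun s => α_w s x) t * α_w t x + α_w t x * deriv (fun s => α_w s x) t) / ρb
       + c * ∑ i, (deriv (fun s => α_θ s x) t i * α_θ t x i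
           + α_θ t x i * deriv (fun s => α_θ s x) t i)
       + ∑ i, ∑ j, (𝒟 (deriv (fun s => A_κ s x) t) i j * A_κ t x i j
           + 𝒟 (A_κ t x) i j * deriv (fun s => A_κ s x) t i j)
       + ∑ i, (𝒞 (deriv (fun s => α_γ s x) t) i * α_γ t x i
           + 𝒞 (α_γ t x) i * deriv (fun s => α_γ s x) t i)) t := by
  have hw : HasDerivAt (fun s => α_w s x) (deriv (fun s => α_w s x) t) t :=
    ((slice_x α_w hsm_w x).differentiable (by simp) t).hasDerivAt
  have hθ : HasDerivAt (fun s => α_θ s x) (deriv (fun s => α_θ s x) t) t :=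
    ((slice_x α_θ hsm_θ x).differentiable (by simp) t).hasDerivAt
  have hγ : HasDerivAt (fun s => α_γ s x) (deriv (fun s => α_γ s x) t) t :=
    ((slice_x α_γ hsm_γ x).differentiable (by simp) t).hasDerivAt
  have hκ : HasDerivAt (fun s => A_κ s x) (deriv (fun s => A_κ s x) t) t :=
    ((slice_x A_κ hsm_κ x).differentiable (by simp) t).hasDerivAt
  have hθi : ∀ i, HasDerivAt (fun s => α_θ s x i) (deriv (fun s => α_θ s x) t i) t := fun i =>
    (ContinuousLinearMap.proj (R := ℝ) (φ := fun _ : Fin 2 => ℝ) i).hasFDerivAt.comp_hasDerivAt t hθ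
  have hγi : ∀ i, HasDerivAt (fun s => α_γ s x i) (deriv (fun s => α_γ s x) t i) t := fun i =>
    (ContinuousLinearMap.proj (R := ℝ) (φ := fun _ : Fin 2 => ℝ) i).hasFDerivAt.comp_hasDerivAt t hγ
  have h𝒞γ : HasDerivAt (fun s => 𝒞 (α_γ s x)) (𝒞 (deriv (fun s => α_γ s x) t)) t :=
    (LinearMap.toContinuousLinearMap 𝒞).hasFDerivAt.comp_hasDerivAt t hγ
  have h𝒞γi : ∀ i, HasDerivAt (fun s => 𝒞 (α_γ s x) i) (𝒞 (deriv (fun s => α_γ s x) t) i) t :=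
    fun i => (ContinuousLinearMap.proj (R := ℝ) (φ := fun _ : Fin 2 => ℝ)
      i).hasFDerivAt.comp_hasDerivAt t h𝒞γ
  have hκij : ∀ i j, HasDerivAt (fun s => A_κ s x i j) (deriv (fun s => A_κ s x) t i j) t := by
    intro i j
    have h1 := (ContinuousLinearMap.proj (R := ℝ) (φ := fun _ : Fin 2 => V2)
      i).hasFDerivAt.comp_hasDerivAt t hκ
    exact (ContinuousLinearMap.proj (R := ℝ) (φ := fun _ : Fin 2 => ℝ)
      j).hasFDerivAt.comp_hasDerivAt t h1
  have h𝒟κ : HasDerivAt (fun s => 𝒟 (A_κ s x)) (𝒟 (deriv (fun s => A_κ s x) t)) t :=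
    (LinearMap.toContinuousLinearMap 𝒟).hasFDerivAt.comp_hasDerivAt t hκ
  have h𝒟κij : ∀ i j, HasDerivAt (fun s => 𝒟 (A_κ s x) i j)
      (𝒟 (deriv (fun s => A_κ s x) t) i j) t := by
    intro i j
    have h1 := (ContinuousLinearMap.proj (R := ℝ) (φ := fun _ : Fin 2 => V2)
      i).hasFDerivAt.comp_hasDerivAt t h𝒟κ
    exact (ContinuousLinearMap.proj (R := ℝ) (φ := fun _ : Fin 2 => ℝ)
      j).hasFDerivAt.comp_hasDerivAt t h1
  have hfe : (fun s => α_w s x ^ 2 / ρb + c * (α_θ s x ⬝ᵥ α_θ s x)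
      + frob (𝒟 (A_κ s x)) (A_κ s x) + 𝒞 (α_γ s x) ⬝ᵥ α_γ s x) =
      (fun s => α_w s x * α_w s x / ρb + c * ∑ i, α_θ s x i * α_θ s x i
       + ∑ i, ∑ j, 𝒟 (A_κ s x) i j * A_κ s x i j
       + ∑ i, 𝒞 (α_γ s x) i * α_γ s x i) := by
    funext s
    simp only [frob, dotProduct]
    ring
  rw [hfe]
  exact ((((hw.fun_mul hw).div_const ρb).add
      ((HasDerivAt.fun_sum fun i _ => (hθi i).fun_mul (hθi i)).const_mul c)).add
      (HasDerivAt.fun_sum fun i _ => HasDerivAt.fun_sum fun j _ => (h𝒟κij i j).fun_mul (hκij i j))).add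
      (HasDerivAt.fun_sum fun i _ => (h𝒞γi i).fun_mul (hγi i))

/-- joint smoothness of the Mindlin energy density -/
lemma dens_contDiff (ρb c : ℝ) (𝒟 : M2 →ₗ[ℝ] M2) (𝒞 : V2 →ₗ[ℝ] V2)
    (α_w : ℝ → V2 → ℝ) (α_θ α_γ : ℝ → V2 → V2) (A_κ : ℝ → V2 → M2)
    (hsm_w : ContDiff ℝ (⊤ : ℕ∞) (Function.uncurry α_w))
    (hsm_θ : ContDiff ℝ (⊤ : ℕ∞) (Function.uncurry α_θ))
    (hsm_γ : ContDiff ℝ (⊤ : ℕ∞) (Function.uncurry α_γ))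
    (hsm_κ : ContDiff ℝ (⊤ : ℕ∞) (Function.uncurry A_κ)) :
    ContDiff ℝ (⊤ : ℕ∞) (Function.uncurry (fun s x => α_w s x ^ 2 / ρb + c * (α_θ s x ⬝ᵥ α_θ s x)
        + frob (𝒟 (A_κ s x)) (A_κ s x) + 𝒞 (α_γ s x) ⬝ᵥ α_γ s x)) := by
  have hθi : ∀ i, ContDiff ℝ (⊤ : ℕ∞) (fun p : ℝ × V2 => α_θ p.1 p.2 i) := fun i =>
    contDiff_pi.mp hsm_θ i
  have hγi : ∀ i, ContDiff ℝ (⊤ : ℕ∞) (fun p : ℝ × V2 => α_γ p.1 p.2 i) := fun i =>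
    contDiff_pi.mp hsm_γ i
  have h𝒞γ : ContDiff ℝ (⊤ : ℕ∞) (fun p : ℝ × V2 => 𝒞 (α_γ p.1 p.2)) :=
    (LinearMap.toContinuousLinearMap 𝒞).contDiff.comp hsm_γ
  have h𝒞γi : ∀ i, ContDiff ℝ (⊤ : ℕ∞) (fun p : ℝ × V2 => 𝒞 (α_γ p.1 p.2) i) := fun i =>
    contDiff_pi.mp h𝒞γ i
  have hκij : ∀ i j, ContDiff ℝ (⊤ : ℕ∞) (fun p : ℝ × V2 => A_κ p.1 p.2 i j) := fun i j =>
    contDiff_pi.mp (contDiff_pi.mp hsm_κ i) j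
  have h𝒟κ : ContDiff ℝ (⊤ : ℕ∞) (fun p : ℝ × V2 => 𝒟 (A_κ p.1 p.2)) :=
    (LinearMap.toContinuousLinearMap 𝒟).contDiff.comp hsm_κ
  have h𝒟κij : ∀ i j, ContDiff ℝ (⊤ : ℕ∞) (fun p : ℝ × V2 => 𝒟 (A_κ p.1 p.2) i j) := fun i j =>
    contDiff_pi.mp (contDiff_pi.mp h𝒟κ i) j
  have hfe : (Function.uncurry (fun s x => α_w s x ^ 2 / ρb + c * (α_θ s x ⬝ᵥ α_θ s x)
        + frob (𝒟 (A_κ s x)) (A_κ s x) + 𝒞 (α_γ s x) ⬝ᵥ α_γ s x)) =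
      (fun p : ℝ × V2 => α_w p.1 p.2 ^ 2 / ρb + c * ∑ i, α_θ p.1 p.2 i * α_θ p.1 p.2 i
       + ∑ i, ∑ j, 𝒟 (A_κ p.1 p.2) i j * A_κ p.1 p.2 i j
       + ∑ i, 𝒞 (α_γ p.1 p.2) i * α_γ p.1 p.2 i) := by
    funext p
    simp only [Function.uncurry, frob, dotProduct]
  rw [hfe]
  refine ContDiff.add (ContDiff.add (ContDiff.add ?_ ?_) ?_) ?_
  · exact (hsm_w.pow 2).div_const ρb
  · exact contDiff_const.mul (ContDiff.sum fun i _ => (hθi i).mul (hθi i))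
  · exact ContDiff.sum fun i _ => ContDiff.sum fun j _ => (h𝒟κij i j).mul (hκij i j)
  · exact ContDiff.sum fun i _ => (h𝒞γi i).mul (hγi i)

lemma frob_comm (A B : M2) : frob A B = frob B A := by
  simp only [frob]
  exact Finset.sum_congr rfl fun i _ => Finset.sum_congr rfl fun j _ => mul_comm _ _

/-- power balance for the Mindlin plate with distributed force `f` and
torque `τ` and clamped boundary conditions:
`dH/dt = ∫_Ω (e_w f + e_θ · τ)`. -/
theorem mindlin_power_balance (Ω : Set V2) (hΩ : IsOpen Ω) (hΩb : IsBounded Ω)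
    (σ : Measure V2) (n : V2 → V2)
    (hdivthm : ∀ F : V2 → V2, ContDiff ℝ (⊤ : ℕ∞) F →
      ∫ x in Ω, divv F x = ∫ x in frontier Ω, F x ⬝ᵥ n x ∂σ)
    (ρ b : ℝ) (hρ : 0 < ρ) (hb : 0 < b)
    (𝒟 : M2 →ₗ[ℝ] M2) (𝒞 : V2 →ₗ[ℝ] V2)
    (h𝒟sym : ∀ A B : M2, frob (𝒟 A) B = frob A (𝒟 B))
    (h𝒟pos : ∀ A : M2, Aᵀ = A → A ≠ 0 → 0 < frob (𝒟 A) A)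
    (h𝒟symmat : ∀ A : M2, Aᵀ = A → (𝒟 A)ᵀ = 𝒟 A)
    (h𝒞sym : ∀ u v : V2, 𝒞 u ⬝ᵥ v = u ⬝ᵥ 𝒞 v)
    (h𝒞pos : ∀ u : V2, u ≠ 0 → 0 < 𝒞 u ⬝ᵥ u)
    (f : ℝ → V2 → ℝ) (τ : ℝ → V2 → V2)
    (hsm_f : ContDiff ℝ (⊤ : ℕ∞) (Function.uncurry f))
    (hsm_τ : ContDiff ℝ (⊤ : ℕ∞) (Function.uncurry τ))
    (α_w : ℝ → V2 → ℝ) (α_θ α_γ : ℝ → V2 → V2) (A_κ : ℝ → V2 → M2)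
    (hsm_w : ContDiff ℝ (⊤ : ℕ∞) (Function.uncurry α_w))
    (hsm_θ : ContDiff ℝ (⊤ : ℕ∞) (Function.uncurry α_θ))
    (hsm_γ : ContDiff ℝ (⊤ : ℕ∞) (Function.uncurry α_γ))
    (hsm_κ : ContDiff ℝ (⊤ : ℕ∞) (Function.uncurry A_κ))
    (hκsym : ∀ t x, (A_κ t x)ᵀ = A_κ t x)
    -- the forced Mindlin port-Hamiltonian system in the co-energy variables
    -- e_w = α_w/(ρb), e_θ = (12/(ρb³))α_θ, E_κ = 𝒟A_κ, e_γ = 𝒞α_γ :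
    (heq_w : ∀ t x, deriv (fun s => α_w s x) t = divv (fun y => 𝒞 (α_γ t y)) x + f t x)
    (heq_θ : ∀ t x, deriv (fun s => α_θ s x) t =
      DivM (fun y => 𝒟 (A_κ t y)) x + 𝒞 (α_γ t x) + τ t x)
    (heq_κ : ∀ t x, deriv (fun s => A_κ s x) t =
      sgrad (fun y => (12 / (ρ * b ^ 3)) • α_θ t y) x)
    (heq_γ : ∀ t x, deriv (fun s => α_γ s x) t =
      grad (fun y => α_w t y / (ρ * b)) x - (12 / (ρ * b ^ 3)) • α_θ t x)
    -- clamped boundary conditions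
    (hbc_w : ∀ t, ∀ x ∈ frontier Ω, α_w t x / (ρ * b) = 0)
    (hbc_θ : ∀ t, ∀ x ∈ frontier Ω, (12 / (ρ * b ^ 3)) • α_θ t x = 0) :
    ∀ t : ℝ,
      deriv (fun s => (1 / 2) * ∫ x in Ω, ((α_w s x) ^ 2 / (ρ * b) +
          (12 / (ρ * b ^ 3)) * (α_θ s x ⬝ᵥ α_θ s x) +
          frob (𝒟 (A_κ s x)) (A_κ s x) + 𝒞 (α_γ s x) ⬝ᵥ α_γ s x)) t =
      ∫ x in Ω, (α_w t x / (ρ * b) * f t x +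
          ((12 / (ρ * b ^ 3)) • α_θ t x) ⬝ᵥ τ t x) := by
  intro t
  have hΩm : MeasurableSet Ω := hΩ.measurableSet
  -- smoothness of the time-t slices
  have hewS : ContDiff ℝ (⊤ : ℕ∞) (fun y => α_w t y / (ρ * b)) := (slice_t α_w hsm_w t).div_const _
  have hθS : ContDiff ℝ (⊤ : ℕ∞) (fun y => α_θ t y) := slice_t α_θ hsm_θ t
  have heθS : ContDiff ℝ (⊤ : ℕ∞) (fun y => (12 / (ρ * b ^ 3)) • α_θ t y) := hθS.const_smul _
  have heγS : ContDiff ℝ (⊤ : ℕ∞) (fun y => 𝒞 (α_γ t y)) :=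
    (LinearMap.toContinuousLinearMap 𝒞).contDiff.comp (slice_t α_γ hsm_γ t)
  have hES : ContDiff ℝ (⊤ : ℕ∞) (fun y => 𝒟 (A_κ t y)) :=
    (LinearMap.toContinuousLinearMap 𝒟).contDiff.comp (slice_t A_κ hsm_κ t)
  have hEsym : ∀ y, ((fun y => 𝒟 (A_κ t y)) y)ᵀ = (fun y => 𝒟 (A_κ t y)) y := fun y =>
    h𝒟symmat _ (hκsym t y)
  -- the flux field
  set Ff : V2 → V2 := fun y => (α_w t y / (ρ * b)) • (𝒞 (α_γ t y)) +
      (𝒟 (A_κ t y)).mulVec ((12 / (ρ * b ^ 3)) • α_θ t y) with hFf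
  have hFfS : ContDiff ℝ (⊤ : ℕ∞) Ff := by
    rw [hFf]
    have h1 : ContDiff ℝ (⊤ : ℕ∞) (fun y => (α_w t y / (ρ * b)) • 𝒞 (α_γ t y)) := hewS.smul heγS
    have h2 : ContDiff ℝ (⊤ : ℕ∞)
        (fun y => (𝒟 (A_κ t y)).mulVec ((12 / (ρ * b ^ 3)) • α_θ t y)) := by
      have he : (fun y => (𝒟 (A_κ t y)).mulVec ((12 / (ρ * b ^ 3)) • α_θ t y)) =
          fun y => (fun i => ∑ j, 𝒟 (A_κ t y) i j * ((12 / (ρ * b ^ 3)) • α_θ t y) j) := by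
        funext y; funext i; simp [Matrix.mulVec, dotProduct]
      rw [he]
      exact contDiff_pi.2 fun i => ContDiff.sum fun j _ =>
        (contDiff_pi.mp (contDiff_pi.mp hES i) j).mul (contDiff_pi.mp heθS j)
    exact h1.add h2
  -- divergence theorem + clamped boundary conditions
  have hdiv0 : ∫ x in Ω, divv Ff x = 0 := by
    rw [hdivthm Ff hFfS]
    have hz : ∀ x ∈ frontier Ω, Ff x ⬝ᵥ n x = (0 : ℝ) := by
      intro x hx
      have hFx : Ff x = 0 := by
        rw [hFf]
        simp only []
        rw [hbc_w t x hx, hbc_θ t x hx]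
        simp
      rw [hFx, zero_dotProduct]
    calc ∫ x in frontier Ω, Ff x ⬝ᵥ n x ∂σ = ∫ _ in frontier Ω, (0 : ℝ) ∂σ :=
          setIntegral_congr_fun isClosed_frontier.measurableSet hz
      _ = 0 := by simp
  -- pointwise identity for the time derivative of the density
  have key : ∀ x : V2,
      deriv (fun s => (α_w s x) ^ 2 / (ρ * b) +
          (12 / (ρ * b ^ 3)) * (α_θ s x ⬝ᵥ α_θ s x) +
          frob (𝒟 (A_κ s x)) (A_κ s x) + 𝒞 (α_γ s x) ⬝ᵥ α_γ s x) t =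
        2 * (divv Ff x + (α_w t x / (ρ * b) * f t x +
          ((12 / (ρ * b ^ 3)) • α_θ t x) ⬝ᵥ τ t x)) := by
    intro x
    have hD := dens_hasDerivAt (ρ * b) (12 / (ρ * b ^ 3)) 𝒟 𝒞 α_w α_θ α_γ A_κ
      hsm_w hsm_θ hsm_γ hsm_κ t x
    rw [hD.deriv]
    have e3 : ∀ K' : M2,
        (∑ i, ∑ j, (𝒟 K' i j * A_κ t x i j + 𝒟 (A_κ t x) i j * K' i j)) =
          2 * frob (𝒟 (A_κ t x)) K' := by
      intro K'
      have h1 : (∑ i, ∑ j, (𝒟 K' i j * A_κ t x i j + 𝒟 (A_κ t x) i j * K' i j)) =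
          frob (𝒟 K') (A_κ t x) + frob (𝒟 (A_κ t x)) K' := by
        simp [frob, Finset.sum_add_distrib]
      rw [h1, h𝒟sym K' (A_κ t x), frob_comm]
      ring
    have e4 : ∀ G' : V2,
        (∑ i, (𝒞 G' i * α_γ t x i + 𝒞 (α_γ t x) i * G' i)) =
          2 * (𝒞 (α_γ t x) ⬝ᵥ G') := by
      intro G'
      have h1 : (∑ i, (𝒞 G' i * α_γ t x i + 𝒞 (α_γ t x) i * G' i)) =
          𝒞 G' ⬝ᵥ α_γ t x + 𝒞 (α_γ t x) ⬝ᵥ G' := by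
        simp [dotProduct, Finset.sum_add_distrib]
      rw [h1, h𝒞sym G' (α_γ t x), dotProduct_comm]
      ring
    rw [e3, e4, heq_w t x, heq_θ t x, heq_κ t x, heq_γ t x]
    have hdc : divv Ff x =
        grad (fun y => α_w t y / (ρ * b)) x ⬝ᵥ (fun y => 𝒞 (α_γ t y)) x +
          (fun y => α_w t y / (ρ * b)) x * divv (fun y => 𝒞 (α_γ t y)) x +
          DivM (fun y => 𝒟 (A_κ t y)) x ⬝ᵥ (fun y => (12 / (ρ * b ^ 3)) • α_θ t y) x +
          frob ((fun y => 𝒟 (A_κ t y)) x) (sgrad (fun y => (12 / (ρ * b ^ 3)) • α_θ t y) x) := by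
      rw [hFf]
      exact divv_comb (fun y => α_w t y / (ρ * b)) (fun y => 𝒞 (α_γ t y))
        (fun y => (12 / (ρ * b ^ 3)) • α_θ t y) (fun y => 𝒟 (A_κ t y))
        hewS heγS heθS hES hEsym x
    rw [hdc]
    simp only [dotProduct, grad, Pi.add_apply, Pi.sub_apply, Pi.smul_apply,
      smul_eq_mul, Fin.sum_univ_two, frob]
    ring
  -- joint smoothness of the density and differentiation under the integral
  have hdens := dens_contDiff (ρ * b) (12 / (ρ * b ^ 3)) 𝒟 𝒞 α_w α_θ α_γ A_κ
    hsm_w hsm_θ hsm_γ hsm_κ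
  have hH := deriv_under_integral Ω hΩm hΩb _ hdens t
  have hH2 : HasDerivAt (fun s => (1 / 2 : ℝ) * ∫ x in Ω, ((α_w s x) ^ 2 / (ρ * b) +
      (12 / (ρ * b ^ 3)) * (α_θ s x ⬝ᵥ α_θ s x) +
      frob (𝒟 (A_κ s x)) (A_κ s x) + 𝒞 (α_γ s x) ⬝ᵥ α_γ s x))
      ((1 / 2 : ℝ) * ∫ x in Ω, deriv (fun s => (α_w s x) ^ 2 / (ρ * b) +
      (12 / (ρ * b ^ 3)) * (α_θ s x ⬝ᵥ α_θ s x) +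
      frob (𝒟 (A_κ s x)) (A_κ s x) + 𝒞 (α_γ s x) ⬝ᵥ α_γ s x) t) t :=
    hH.const_mul (1 / 2 : ℝ)
  rw [hH2.deriv]
  have hcongr : (∫ x in Ω, deriv (fun s => (α_w s x) ^ 2 / (ρ * b) +
      (12 / (ρ * b ^ 3)) * (α_θ s x ⬝ᵥ α_θ s x) +
      frob (𝒟 (A_κ s x)) (A_κ s x) + 𝒞 (α_γ s x) ⬝ᵥ α_γ s x) t) =
      ∫ x in Ω, 2 * (divv Ff x + (α_w t x / (ρ * b) * f t x +
        ((12 / (ρ * b ^ 3)) • α_θ t x) ⬝ᵥ τ t x)) :=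
    setIntegral_congr_fun hΩm fun x _ => key x
  rw [hcongr, integral_const_mul]
  have hsrcC : Continuous (fun x => α_w t x / (ρ * b) * f t x +
      ((12 / (ρ * b ^ 3)) • α_θ t x) ⬝ᵥ τ t x) := by
    have h1 : Continuous (fun x => α_w t x / (ρ * b)) := hewS.continuous
    have h2 : Continuous (fun x => f t x) := (slice_t f hsm_f t).continuous
    have h3 : Continuous (fun x => ((12 / (ρ * b ^ 3)) • α_θ t x) ⬝ᵥ τ t x) := by
      have he : (fun x => ((12 / (ρ * b ^ 3)) • α_θ t x) ⬝ᵥ τ t x) =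
          fun x => ∑ i, (12 / (ρ * b ^ 3)) * α_θ t x i * τ t x i := by
        funext x; simp [dotProduct]
      rw [he]
      exact continuous_finset_sum _ fun i _ =>
        (continuous_const.mul (contDiff_pi.mp hθS i).continuous).mul
          (contDiff_pi.mp (slice_t τ hsm_τ t) i).continuous
    exact (h1.mul h2).add h3
  have hI1 : IntegrableOn (fun x => divv Ff x) Ω :=
    cont_integrableOn Ω hΩb _ (continuous_divv Ff hFfS)
  have hI2 : IntegrableOn (fun x => α_w t x / (ρ * b) * f t x +
      ((12 / (ρ * b ^ 3)) • α_θ t x) ⬝ᵥ τ t x) Ω :=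
    cont_integrableOn Ω hΩb _ hsrcC
  rw [integral_add hI1 hI2, hdiv0]
  ring
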